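/- arXiv:0911.2093 — 4 statements merged into one kernel-verified Lean document; each statement's English description precedes it below -/
import Mathlib

section
/- Let Z ~ SN_k(Ω,α) and let A be a non-singular k×k real matrix such that AᵀΩA is a correlation matrix (i.e. has unit diagonal). Then AᵀZ ~ SN_k(AᵀΩA, A⁻¹α). -/
open MeasureTheory Matrix ProbabilityTheory Real

/-- Standard normal cumulative distribution function
`Φ(x) = ∫_{-∞}^x (2π)^{-1/2} exp(-u²/2) du`. -/
noncomputable def stdNormCDF (x : ℝ) : ℝ :=
  ∫ u in Set.Iic x, (2 * Real.pi) ^ (-(1:ℝ)/2) * Real.exp (-(u ^ 2) / 2)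

/-- Density `φ(z; Ω) = (2π)^{-k/2} (det Ω)^{-1/2} exp(-½ zᵀ Ω⁻¹ z)` of the centred
multivariate normal distribution with covariance matrix `Ω`. -/
noncomputable def mvNormalPDF {ι : Type*} [Fintype ι] [DecidableEq ι]
    (Ω : Matrix ι ι ℝ) (z : ι → ℝ) : ℝ :=
  (2 * Real.pi) ^ (-(Fintype.card ι : ℝ) / 2) * Ω.det ^ (-(1:ℝ)/2) *
    Real.exp (-(z ⬝ᵥ Ω⁻¹.mulVec z) / 2)

/-- Density `f(z) = 2 φ(z; Ω) Φ(αᵀ z)` of the multivariate skew-normal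
distribution `SN(Ω, α)`. -/
noncomputable def snPDF {ι : Type*} [Fintype ι] [DecidableEq ι]
    (Ω : Matrix ι ι ℝ) (α : ι → ℝ) (z : ι → ℝ) : ℝ :=
  2 * mvNormalPDF Ω z * stdNormCDF (α ⬝ᵥ z)

/-- A correlation matrix: symmetric positive definite with unit diagonal. -/
def IsCorrelationMatrix {ι : Type*} [Fintype ι] (Ω : Matrix ι ι ℝ) : Prop :=
  Ω.PosDef ∧ ∀ i, Ω i i = 1

/-- The law of the multivariate skew-normal distribution `SN(Ω, α)`:
the measure on `ι → ℝ` with density `snPDF Ω α` w.r.t. Lebesgue measure. -/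
noncomputable def snMeasure {ι : Type*} [Fintype ι] [DecidableEq ι]
    (Ω : Matrix ι ι ℝ) (α : ι → ℝ) : Measure (ι → ℝ) :=
  volume.withDensity fun z => ENNReal.ofReal (snPDF Ω α z)

/-- Chi-square density with `p` degrees of freedom. -/
noncomputable def chiSqPDF (p : ℕ) (x : ℝ) : ℝ :=
  if 0 < x then x ^ ((p:ℝ)/2 - 1) * Real.exp (-x/2) / (2 ^ ((p:ℝ)/2) * Real.Gamma ((p:ℝ)/2))
  else 0

/-- Chi-square law with `p` degrees of freedom. -/
noncomputable def chiSqMeasure (p : ℕ) : Measure ℝ :=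
  volume.withDensity fun x => ENNReal.ofReal (chiSqPDF p x)

/- ### Auxiliary lemmas -/

lemma integrable_gauss :
    Integrable (fun u : ℝ => (2 * Real.pi) ^ (-(1:ℝ)/2) * Real.exp (-(u ^ 2) / 2)) := by
  have h : Integrable (fun u : ℝ => Real.exp (-(1/2 : ℝ) * u ^ 2)) :=
    integrable_exp_neg_mul_sq (by norm_num)
  rw [show (fun u : ℝ => (2 * Real.pi) ^ (-(1:ℝ)/2) * Real.exp (-(u ^ 2) / 2)) =
      fun u => (2 * Real.pi) ^ (-(1:ℝ)/2) * Real.exp (-(1/2 : ℝ) * u ^ 2) by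
    funext u; rw [show -(u ^ 2) / 2 = -(1/2 : ℝ) * u ^ 2 by ring]]
  exact h.const_mul _

lemma monotone_stdNormCDF : Monotone stdNormCDF := by
  intro a b hab
  apply setIntegral_mono_set integrable_gauss.integrableOn
  · filter_upwards with u; positivity
  · exact Filter.Eventually.of_forall (Set.Iic_subset_Iic.mpr hab)

lemma measurable_stdNormCDF : Measurable stdNormCDF := monotone_stdNormCDF.measurable

lemma measurable_snPDF {ι : Type*} [Fintype ι] [DecidableEq ι]
    (Ω : Matrix ι ι ℝ) (α : ι → ℝ) : Measurable (snPDF Ω α) := by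
  unfold snPDF mvNormalPDF
  have h1 : Measurable fun z : ι → ℝ => z ⬝ᵥ Ω⁻¹.mulVec z := by
    simp only [dotProduct, Matrix.mulVec]; fun_prop
  have h2 : Measurable fun z : ι → ℝ => α ⬝ᵥ z := by
    simp only [dotProduct]; fun_prop
  exact ((measurable_const.mul ((measurable_const.mul measurable_const).mul
    ((h1.neg.div_const 2).exp)))).mul (measurable_stdNormCDF.comp h2)

lemma map_withDensity_comp {α β : Type*} [MeasurableSpace α] [MeasurableSpace β]
    (μ : Measure α) {T : α → β} (hT : Measurable T) {g : β → ENNReal} (hg : Measurable g) :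
    Measure.map T (μ.withDensity (g ∘ T)) = (Measure.map T μ).withDensity g := by
  ext s hs
  rw [Measure.map_apply hT hs, withDensity_apply _ (hT hs), withDensity_apply _ hs,
    setLIntegral_map hs hg hT]
  rfl

/-- non-singular linear transforms of a multivariate skew-normal
vector: if `Z ~ SN_k(Ω, α)` and `AᵀΩA` has unit diagonal then
`AᵀZ ~ SN_k(AᵀΩA, A⁻¹α)`. -/
theorem skewNormal_linear_transform {k : ℕ}
    (Ω : Matrix (Fin k) (Fin k) ℝ) (hΩ : IsCorrelationMatrix Ω) (α : Fin k → ℝ)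
    {S : Type*} [MeasureSpace S] [IsProbabilityMeasure (ℙ : Measure S)]
    (Z : S → Fin k → ℝ) (hZmeas : Measurable Z)
    (hZlaw : Measure.map Z ℙ = snMeasure Ω α)
    (A : Matrix (Fin k) (Fin k) ℝ) (hA : A.det ≠ 0)
    (hcorr : ∀ i, (Aᵀ * Ω * A) i i = 1) :
    Measure.map (fun ω => Aᵀ.mulVec (Z ω)) ℙ = snMeasure (Aᵀ * Ω * A) (A⁻¹.mulVec α) := by
  classical
  set Ω' := Aᵀ * Ω * A with hΩ'
  set α' := A⁻¹.mulVec α with hα'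
  have hAT : Aᵀ.det ≠ 0 := by rwa [Matrix.det_transpose]
  have hdetΩ : 0 < Ω.det := hΩ.1.det_pos
  have habs : (0:ℝ) < |A.det| := abs_pos.mpr hA
  -- pointwise density identity
  have key : ∀ z, snPDF Ω α z = |A.det| * snPDF Ω' α' (Aᵀ.mulVec z) := by
    intro z
    have hdet' : Ω'.det = A.det ^ 2 * Ω.det := by
      rw [hΩ', Matrix.det_mul, Matrix.det_mul, Matrix.det_transpose]; ring
    have hinv' : Ω'⁻¹ = A⁻¹ * Ω⁻¹ * Aᵀ⁻¹ := by
      rw [hΩ', Matrix.mul_inv_rev, Matrix.mul_inv_rev, Matrix.mul_assoc]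
    have hquad : (Aᵀ.mulVec z) ⬝ᵥ Ω'⁻¹.mulVec (Aᵀ.mulVec z) = z ⬝ᵥ Ω⁻¹.mulVec z := by
      have hmm : A⁻¹ * Ω⁻¹ * Aᵀ⁻¹ * Aᵀ = A⁻¹ * Ω⁻¹ := by
        rw [Matrix.mul_assoc (A⁻¹ * Ω⁻¹), Matrix.nonsing_inv_mul _ hAT.isUnit, Matrix.mul_one]
      have hAm : A * (A⁻¹ * Ω⁻¹) = Ω⁻¹ := by
        rw [← Matrix.mul_assoc, Matrix.mul_nonsing_inv _ hA.isUnit, Matrix.one_mul]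
      rw [hinv', Matrix.mulVec_mulVec, hmm, Matrix.mulVec_transpose,
        Matrix.dotProduct_mulVec, Matrix.vecMul_vecMul, hAm, ← Matrix.dotProduct_mulVec]
    have hdot : α' ⬝ᵥ (Aᵀ.mulVec z) = α ⬝ᵥ z := by
      rw [dotProduct_comm, hα', Matrix.mulVec_transpose, Matrix.dotProduct_mulVec,
        Matrix.vecMul_vecMul, Matrix.mul_nonsing_inv _ hA.isUnit, Matrix.vecMul_one,
        dotProduct_comm]
    have hrpow : Ω'.det ^ (-(1:ℝ)/2) = |A.det|⁻¹ * Ω.det ^ (-(1:ℝ)/2) := by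
      rw [hdet', ← sq_abs, Real.mul_rpow (by positivity) hdetΩ.le]
      congr 1
      rw [← Real.rpow_natCast |A.det| 2, ← Real.rpow_mul (abs_nonneg _)]
      norm_num [Real.rpow_neg_one]
    unfold snPDF mvNormalPDF
    rw [hquad, hdot, hrpow]
    field_simp
  -- the linear map `z ↦ Aᵀ z`
  set T : (Fin k → ℝ) → (Fin k → ℝ) := fun z => Aᵀ.mulVec z with hTdef
  have hTlin : T = ⇑(Matrix.toLin' Aᵀ) := by funext z; simp [hTdef, Matrix.toLin'_apply]
  have hT : Measurable T := by
    rw [hTlin]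
    exact (Matrix.toLin' Aᵀ).continuous_of_finiteDimensional.measurable
  have hdetT : LinearMap.det (Matrix.toLin' Aᵀ) = A.det := by
    rw [LinearMap.det_toLin', Matrix.det_transpose]
  have hmapvol : Measure.map T volume = ENNReal.ofReal |A.det|⁻¹ • volume := by
    rw [hTlin, Real.map_linearMap_volume_pi_eq_smul_volume_pi (by rw [hdetT]; exact hA),
      hdetT, abs_inv]
  set g : (Fin k → ℝ) → ENNReal := fun y => ENNReal.ofReal (|A.det| * snPDF Ω' α' y) with hg
  have hgmeas : Measurable g :=
    ENNReal.measurable_ofReal.comp (measurable_const.mul (measurable_snPDF Ω' α'))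
  have h1 : Measure.map (fun ω => Aᵀ.mulVec (Z ω)) ℙ = Measure.map T (snMeasure Ω α) := by
    rw [← hZlaw, Measure.map_map hT hZmeas]; rfl
  rw [h1]
  have h2 : snMeasure Ω α = volume.withDensity (g ∘ T) := by
    unfold snMeasure
    congr 1
    funext z
    simp only [Function.comp_apply, hg, hTdef]
    rw [key z]
  rw [h2, map_withDensity_comp volume hT hgmeas, hmapvol, withDensity_smul_measure,
    ← withDensity_smul _ hgmeas]
  unfold snMeasure
  congr 1
  funext y
  simp only [Pi.smul_apply, hg, smul_eq_mul]
  rw [← ENNReal.ofReal_mul (by positivity), ← mul_assoc, inv_mul_cancel₀ habs.ne', one_mul]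
end

section
/- Let Ω be a k×k symmetric positive definite matrix, ω = √(diag Ω) the diagonal matrix of square roots of the diagonal entries of Ω, Ω_z = ω⁻¹Ωω⁻¹, α ∈ ℝ^k, δ = (1+αᵀΩ_zα)^{-1/2} Ω_zα, μ_z = √(2/π) δ, and let ξ₁, ξ₂ ∈ ℝ^k and π₁, π₂ > 0. Define ζ₀(x) = log(2Φ(x)) and w_i(y) = αᵀω⁻¹(y−ξ_i) for i = 1,2. If (ξ₁−ξ₂)ᵀω⁻¹α = 0, then for every y ∈ ℝ^k the likelihood-based discriminant function (ξ₁−ξ₂)ᵀΩ⁻¹(y − ½(ξ₁+ξ₂)) + ζ₀(w₁(y)) − ζ₀(w₂(y)) + log(π₁/π₂) equals the Fisher linear discriminant function (ξ₁−ξ₂)ᵀ(Ω − ωμ_zμ_zᵀω)⁻¹(y − ½(ξ₁+ξ₂+2ωμ_z)) + log(π₁/π₂); in particular the two discriminant rules coincide. -/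
open MeasureTheory Matrix ProbabilityTheory Real

/-!
Write `a = ξ₁ - ξ₂`, `u = ω⁻¹α` and `v = ωμ_z`. The hypothesis `aᵀu = 0` makes the skewness
arguments `w₁(y)` and `w₂(y)` equal, so the `ζ₀` terms cancel. Unfolding `μ_z` gives `v = c Ωu`
for a scalar `c`, so `aᵀΩ⁻¹v = c aᵀu = 0`; then `aᵀΩ⁻¹ (Ω - vvᵀ) = aᵀ`, i.e. the rank-one
correction changes neither the discriminant direction `aᵀ(Ω - vvᵀ)⁻¹ = aᵀΩ⁻¹` nor, through
`aᵀΩ⁻¹v = 0`, the centring. By the matrix determinant lemma `Ω - vvᵀ` is invertible because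
`vᵀΩ⁻¹v = (2/π) q/(1+q) < 1` with `q = αᵀΩ_zα`.
-/

section RankOneUpdate
variable {n K : Type*} [Fintype n] [DecidableEq n] [Field K]

theorem det_sub_vecMulVec {Ω : Matrix n n K} (hΩ : IsUnit Ω.det) (v w : n → K) :
    (Ω - vecMulVec v w).det = Ω.det * (1 - w ⬝ᵥ Ω⁻¹ *ᵥ v) := by
  rw [sub_eq_add_neg, ← vecMulVec_neg, vecMulVec_eq Unit,
    det_add_replicateCol_mul_replicateRow hΩ, det_unique (n := Unit), Matrix.mul_assoc,
    ← replicateCol_mulVec]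
  simp [sub_eq_add_neg]

theorem vecMul_inv_sub_vecMulVec {Ω : Matrix n n K} {a v w : n → K}
    (hΩ : IsUnit Ω.det) (hM : IsUnit (Ω - vecMulVec v w).det) (ha : a ᵥ* Ω⁻¹ ⬝ᵥ v = 0) :
    a ᵥ* (Ω - vecMulVec v w)⁻¹ = a ᵥ* Ω⁻¹ := by
  have hb : a ᵥ* Ω⁻¹ ᵥ* (Ω - vecMulVec v w) = a := by
    rw [vecMul_sub, vecMul_vecMul, nonsing_inv_mul _ hΩ, vecMul_one, vecMul_vecMulVec, ha,
      zero_smul, sub_zero]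
  nth_rw 1 [← hb]
  rw [vecMul_vecMul, mul_nonsing_inv _ hM, vecMul_one]

theorem dotProduct_inv_sub_vecMulVec_mulVec_sub {Ω : Matrix n n K} {a v : n → K}
    (hΩ : IsUnit Ω.det) (hv : v ⬝ᵥ Ω⁻¹ *ᵥ v ≠ 1) (ha : a ⬝ᵥ Ω⁻¹ *ᵥ v = 0) (z : n → K) :
    a ⬝ᵥ (Ω - vecMulVec v v)⁻¹ *ᵥ (z - v) = a ⬝ᵥ Ω⁻¹ *ᵥ z := by
  have hM : IsUnit (Ω - vecMulVec v v).det := by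
    rw [det_sub_vecMulVec hΩ]
    exact hΩ.mul (sub_ne_zero.2 hv.symm).isUnit
  rw [dotProduct_mulVec, vecMul_inv_sub_vecMulVec hΩ hM (by rwa [← dotProduct_mulVec]),
    ← dotProduct_mulVec, mulVec_sub, dotProduct_sub, ha, sub_zero]

end RankOneUpdate

section Congruence
variable {n R : Type*} [Fintype n] [CommRing R]

theorem dotProduct_mul_mul_mulVec {B : Matrix n n R} (hB : B.IsSymm) (Ω : Matrix n n R)
    (x : n → R) : x ⬝ᵥ (B * Ω * B) *ᵥ x = (B *ᵥ x) ⬝ᵥ Ω *ᵥ (B *ᵥ x) := by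
  rw [← mulVec_mulVec, ← mulVec_mulVec, dotProduct_mulVec, ← mulVec_transpose, hB.eq]

theorem dotProduct_mulVec_sub_eq_of_dotProduct_eq_zero {B : Matrix n n R} (hB : B.IsSymm)
    {x x₁ x₂ : n → R} (h : (x₁ - x₂) ⬝ᵥ B *ᵥ x = 0) (y : n → R) :
    x ⬝ᵥ B *ᵥ (y - x₁) = x ⬝ᵥ B *ᵥ (y - x₂) := by
  rw [dotProduct_mulVec, dotProduct_mulVec, ← mulVec_transpose, hB.eq, dotProduct_sub,
    dotProduct_sub, dotProduct_comm _ x₁, dotProduct_comm _ x₂]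
  rw [sub_dotProduct] at h
  linear_combination -h

variable [DecidableEq n]

theorem mulVec_inv_mul_mul_inv_mulVec {D : Matrix n n R} (hD : IsUnit D.det) (Ω : Matrix n n R)
    (x : n → R) : D *ᵥ (D⁻¹ * Ω * D⁻¹) *ᵥ x = Ω *ᵥ D⁻¹ *ᵥ x := by
  rw [mulVec_mulVec, mulVec_mulVec, ← Matrix.mul_assoc, ← Matrix.mul_assoc,
    mul_nonsing_inv _ hD, Matrix.one_mul]

end Congruence

theorem sq_sqrt_two_div_pi_mul_rpow_mul_lt_one {q : ℝ} (hq : 0 ≤ q) :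
    (√(2 / π) * (1 + q) ^ (-(1:ℝ) / 2)) ^ 2 * q < 1 := by
  have h1q : 0 < 1 + q := by linarith
  have hpi : 2 / π < 1 := (div_lt_one pi_pos).2 (by linarith [pi_gt_three])
  have hfrac : q / (1 + q) < 1 := (div_lt_one h1q).2 (by linarith)
  rw [mul_pow, sq_sqrt (by positivity), ← rpow_natCast, ← rpow_mul h1q.le,
    show -(1:ℝ) / 2 * ((2 : ℕ) : ℝ) = -1 by norm_num, rpow_neg_one]
  calc 2 / π * (1 + q)⁻¹ * q = 2 / π * (q / (1 + q)) := by ring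
    _ < 1 := by nlinarith [div_nonneg hq h1q.le]

theorem skewNormal_discriminant_rules_coincide_general {k : ℕ}
    (Ω : Matrix (Fin k) (Fin k) ℝ) (hΩ : Ω.PosDef)
    (α ξ₁ ξ₂ : Fin k → ℝ) (pr₁ pr₂ : ℝ)
    (dg : Matrix (Fin k) (Fin k) ℝ)
    (hdg : dg = Matrix.diagonal fun i => Real.sqrt (Ω i i))
    (Ωz : Matrix (Fin k) (Fin k) ℝ) (hΩz : Ωz = dg⁻¹ * Ω * dg⁻¹)
    (δ : Fin k → ℝ) (hδ : δ = (1 + α ⬝ᵥ Ωz.mulVec α) ^ (-(1:ℝ)/2) • Ωz.mulVec α)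
    (μz : Fin k → ℝ) (hμz : μz = Real.sqrt (2 / Real.pi) • δ)
    (hcond : (ξ₁ - ξ₂) ⬝ᵥ dg⁻¹.mulVec α = 0) (y : Fin k → ℝ) :
    (ξ₁ - ξ₂) ⬝ᵥ Ω⁻¹.mulVec (y - (1/2 : ℝ) • (ξ₁ + ξ₂))
        + Real.log (2 * stdNormCDF (α ⬝ᵥ dg⁻¹.mulVec (y - ξ₁)))
        - Real.log (2 * stdNormCDF (α ⬝ᵥ dg⁻¹.mulVec (y - ξ₂)))
        + Real.log (pr₁ / pr₂) =
      (ξ₁ - ξ₂) ⬝ᵥ (Ω - dg * vecMulVec μz μz * dg)⁻¹.mulVec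
          (y - (1/2 : ℝ) • (ξ₁ + ξ₂ + (2:ℝ) • dg.mulVec μz))
        + Real.log (pr₁ / pr₂) := by
  have hΩ_unit : IsUnit Ω.det := hΩ.det_pos.ne'.isUnit
  have hdg_unit : IsUnit dg.det := by
    rw [hdg, det_diagonal]
    exact (Finset.prod_pos fun i _ => sqrt_pos.2 hΩ.diag_pos).ne'.isUnit
  have hdg_symm : dg.IsSymm := hdg ▸ isSymm_diagonal _
  set u := dg⁻¹ *ᵥ α
  set c := √(2 / π) * (1 + u ⬝ᵥ Ω *ᵥ u) ^ (-(1:ℝ) / 2)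
  have hv : dg *ᵥ μz = c • Ω *ᵥ u := by
    rw [hμz, hδ, hΩz, dotProduct_mul_mul_mulVec hdg_symm.inv, mulVec_smul, mulVec_smul,
      mulVec_inv_mul_mul_inv_mulVec hdg_unit, smul_smul]
  have hΩv : Ω⁻¹ *ᵥ dg *ᵥ μz = c • u := by
    rw [hv, mulVec_smul, mulVec_mulVec, nonsing_inv_mul _ hΩ_unit, one_mulVec]
  have horth : (ξ₁ - ξ₂) ⬝ᵥ Ω⁻¹ *ᵥ dg *ᵥ μz = 0 := by
    rw [hΩv, dotProduct_smul, hcond, smul_zero]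
  have hnondeg : dg *ᵥ μz ⬝ᵥ Ω⁻¹ *ᵥ dg *ᵥ μz ≠ 1 := by
    rw [hΩv, dotProduct_smul, dotProduct_comm, hv, dotProduct_smul, smul_eq_mul, smul_eq_mul,
      ← mul_assoc, ← sq]
    exact (sq_sqrt_two_div_pi_mul_rpow_mul_lt_one (hΩ.posSemidef.dotProduct_mulVec_nonneg u)).ne
  rw [dotProduct_mulVec_sub_eq_of_dotProduct_eq_zero hdg_symm.inv hcond y, mul_vecMulVec,
    vecMulVec_mul, ← mulVec_transpose, hdg_symm.eq,
    show y - (1/2 : ℝ) • (ξ₁ + ξ₂ + (2:ℝ) • dg *ᵥ μz) = y - (1/2 : ℝ) • (ξ₁ + ξ₂) - dg *ᵥ μz by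
      module,
    dotProduct_inv_sub_vecMulVec_mulVec_sub hΩ_unit hnondeg horth]
  ring

/-- when `(ξ₁ − ξ₂)ᵀω⁻¹α = 0`, the likelihood-based discriminant
function of two skew-normal populations `SN_k(ξ_i, Ω, α)` coincides with the
Fisher linear discriminant function. -/
theorem skewNormal_discriminant_rules_coincide {k : ℕ}
    (Ω : Matrix (Fin k) (Fin k) ℝ) (hΩ : Ω.PosDef)
    (α ξ₁ ξ₂ : Fin k → ℝ) (pr₁ pr₂ : ℝ) (hpr₁ : 0 < pr₁) (hpr₂ : 0 < pr₂)
    (dg : Matrix (Fin k) (Fin k) ℝ)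
    (hdg : dg = Matrix.diagonal fun i => Real.sqrt (Ω i i))
    (Ωz : Matrix (Fin k) (Fin k) ℝ) (hΩz : Ωz = dg⁻¹ * Ω * dg⁻¹)
    (δ : Fin k → ℝ) (hδ : δ = (1 + α ⬝ᵥ Ωz.mulVec α) ^ (-(1:ℝ)/2) • Ωz.mulVec α)
    (μz : Fin k → ℝ) (hμz : μz = Real.sqrt (2 / Real.pi) • δ)
    (hcond : (ξ₁ - ξ₂) ⬝ᵥ dg⁻¹.mulVec α = 0) (y : Fin k → ℝ) :
    (ξ₁ - ξ₂) ⬝ᵥ Ω⁻¹.mulVec (y - (1/2 : ℝ) • (ξ₁ + ξ₂))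
        + Real.log (2 * stdNormCDF (α ⬝ᵥ dg⁻¹.mulVec (y - ξ₁)))
        - Real.log (2 * stdNormCDF (α ⬝ᵥ dg⁻¹.mulVec (y - ξ₂)))
        + Real.log (pr₁ / pr₂) =
      (ξ₁ - ξ₂) ⬝ᵥ (Ω - dg * vecMulVec μz μz * dg)⁻¹.mulVec
          (y - (1/2 : ℝ) • (ξ₁ + ξ₂ + (2:ℝ) • dg.mulVec μz))
        + Real.log (pr₁ / pr₂) :=
  skewNormal_discriminant_rules_coincide_general Ω hΩ α ξ₁ ξ₂ pr₁ pr₂ dg hdg Ωz hΩz δ hδ μz hμz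
    hcond y
end

section
/- Let X be a real random variable whose law has an even density G' with cumulative distribution function G. Let Σ be a k×k symmetric positive definite matrix and let f be a probability density on ℝ^k of elliptical form centred at the origin, i.e. f(y) = g(yᵀΣ⁻¹y) for some measurable function g : [0,∞) → [0,∞). Then for every a ∈ ℝ^k, the function y ↦ 2 f(y) G(aᵀy) is a probability density on ℝ^k, i.e. ∫_{ℝ^k} 2 f(y) G(aᵀy) dy = 1. -/
open MeasureTheory Matrix ProbabilityTheory Real

/-! The law `μ` of `X` is symmetric and atomless, so `G x + G (-x) = μ (Iic x) + μ (Ioi x) = 1`.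
Since `f` is even, substituting `y ↦ -y` shows `∫ f y G (aᵀy) = ∫ f y G (-aᵀy)`; adding the
two integrals gives `∫ f = 1`, so each equals `1 / 2`. -/

open Set

namespace MeasureTheory

theorem Measure.isNegInvariant_withDensity {G : Type*} [MeasurableSpace G] [InvolutiveNeg G]
    [MeasurableNeg G] {ν : Measure G} [ν.IsNegInvariant] {f : G → ENNReal}
    (hf : ∀ᵐ x ∂ν, f (-x) = f x) : (ν.withDensity f).IsNegInvariant := by
  refine ⟨Measure.ext fun s hs => ?_⟩
  rw [Measure.neg, Measure.map_apply measurable_neg hs, withDensity_apply _ hs,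
    withDensity_apply _ (measurable_neg hs), ← setLIntegral_congr_fun_ae (measurable_neg hs)
      (hf.mono fun x hx _ => hx)]
  exact (Measure.measurePreserving_neg ν).setLIntegral_comp_preimage_emb
    (MeasurableEquiv.neg G).measurableEmbedding f s

theorem measureReal_Iic_add_measureReal_Iic_neg {μ : Measure ℝ} [IsProbabilityMeasure μ]
    [NullSingletonClass μ] [μ.IsNegInvariant] (x : ℝ) :
    μ.real (Iic x) + μ.real (Iic (-x)) = 1 := by
  have h : μ.real (Iic (-x)) = μ.real (Iic x)ᶜ := by
    rw [compl_Iic, measureReal_congr Ioi_ae_eq_Ici, measureReal_def, measureReal_def,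
      ← Measure.measure_preimage_neg μ (Ici x)]
    simp
  rw [h, measureReal_add_measureReal_compl measurableSet_Iic, probReal_univ]

theorem integral_two_mul_mul_eq_integral_of_add_neg_eq_one {E : Type*} [MeasurableSpace E]
    [AddGroup E] [MeasurableNeg E] {μ : Measure E} [μ.IsNegInvariant] {f w : E → ℝ}
    (hf : Integrable f μ) (hf_even : ∀ y, f (-y) = f y) (hw : AEStronglyMeasurable w μ)
    (hw0 : ∀ y, 0 ≤ w y) (hw_add : ∀ y, w y + w (-y) = 1) :
    ∫ y, 2 * f y * w y ∂μ = ∫ y, f y ∂μ := by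
  have hfw : Integrable (fun y => f y * w y) μ :=
    hf.mul_bdd hw (c := 1) (Filter.Eventually.of_forall fun y => by
      rw [Real.norm_of_nonneg (hw0 y)]; linarith [hw_add y, hw0 (-y)])
  have hfw_neg : Integrable (fun y => f y * w (-y)) μ := by
    simpa only [hf_even] using hfw.comp_neg
  have hsym : ∫ y, f y * w (-y) ∂μ = ∫ y, f y * w y ∂μ := by
    simpa only [hf_even] using integral_neg_eq_self (fun y => f y * w y) μ
  calc ∫ y, 2 * f y * w y ∂μ = ∫ y, f y * w y ∂μ + ∫ y, f y * w (-y) ∂μ := by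
        simp only [hsym, mul_assoc, integral_const_mul]; ring
    _ = ∫ y, f y ∂μ := by
        rw [← integral_add hfw hfw_neg]
        simp only [← mul_add, hw_add, mul_one]

end MeasureTheory

theorem skewing_elliptical_density_general {k : ℕ}
    {S : Type*} [MeasureSpace S] [IsProbabilityMeasure (ℙ : Measure S)]
    (X : S → ℝ) (hXmeas : Measurable X) (G' : ℝ → ℝ)
    (hXlaw : Measure.map X ℙ = volume.withDensity fun x => ENNReal.ofReal (G' x))
    (hG'even : ∀ᵐ x : ℝ, G' (-x) = G' x)
    (G : ℝ → ℝ) (hG : ∀ x, G x = (ℙ {ω | X ω ≤ x}).toReal)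
    (Sig : Matrix (Fin k) (Fin k) ℝ)
    (g : ℝ → ℝ) (hg0 : ∀ x, 0 ≤ g x)
    (f : (Fin k → ℝ) → ℝ) (hf : ∀ y, f y = g (y ⬝ᵥ Sig⁻¹.mulVec y))
    (hf1 : (∫ y : Fin k → ℝ, f y) = 1)
    (a : Fin k → ℝ) :
    (∀ y, 0 ≤ 2 * f y * G (a ⬝ᵥ y)) ∧ (∫ y : Fin k → ℝ, 2 * f y * G (a ⬝ᵥ y)) = 1 := by
  set μ := Measure.map X ℙ
  have : IsProbabilityMeasure μ := Measure.isProbabilityMeasure_map hXmeas.aemeasurable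
  have : μ.IsNegInvariant := by
    rw [hXlaw]; exact Measure.isNegInvariant_withDensity (hG'even.mono fun x hx => by rw [hx])
  have : NullSingletonClass μ := by rw [hXlaw]; infer_instance
  have hG_law : ∀ x, G x = μ.real (Iic x) := fun x => by
    rw [hG, measureReal_def, Measure.map_apply hXmeas measurableSet_Iic]; rfl
  have hG_add : ∀ x, G x + G (-x) = 1 := fun x => by
    simp only [hG_law, measureReal_Iic_add_measureReal_Iic_neg]
  have hG_mono : Monotone G := fun x y hxy => by
    simp only [hG_law]; exact measureReal_mono (Iic_subset_Iic.mpr hxy)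
  have hf_int : Integrable f := by
    by_contra h; rw [integral_undef h] at hf1; exact zero_ne_one hf1
  have hf_even : ∀ y, f (-y) = f y := fun y => by
    simp only [hf, mulVec_neg, dotProduct_neg, neg_dotProduct, neg_neg]
  have hw_meas : Measurable fun y : Fin k → ℝ => G (a ⬝ᵥ y) :=
    hG_mono.measurable.comp (continuous_const.dotProduct continuous_id).measurable
  refine ⟨fun y => ?_, ?_⟩
  · rw [hf, hG_law]; exact mul_nonneg (mul_nonneg two_pos.le (hg0 _)) measureReal_nonneg
  · rw [integral_two_mul_mul_eq_integral_of_add_neg_eq_one hf_int hf_even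
      hw_meas.aestronglyMeasurable (fun y => by rw [hG_law]; exact measureReal_nonneg)
      (fun y => by simpa only [dotProduct_neg] using hG_add (a ⬝ᵥ y)), hf1]

/-- skewing an elliptical density.  If `X` has an even density
`G'` with cdf `G` and `f(y) = g(yᵀΣ⁻¹y)` is an elliptical probability density
centred at the origin, then for every `a ∈ ℝ^k`, `y ↦ 2 f(y) G(aᵀy)` is a
probability density on `ℝ^k`. -/
theorem skewing_elliptical_density {k : ℕ}
    {S : Type*} [MeasureSpace S] [IsProbabilityMeasure (ℙ : Measure S)]
    (X : S → ℝ) (hXmeas : Measurable X) (G' : ℝ → ℝ)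
    (hXlaw : Measure.map X ℙ = volume.withDensity fun x => ENNReal.ofReal (G' x))
    (hG'even : ∀ᵐ x : ℝ, G' (-x) = G' x)
    (G : ℝ → ℝ) (hG : ∀ x, G x = (ℙ {ω | X ω ≤ x}).toReal)
    (Sig : Matrix (Fin k) (Fin k) ℝ) (hSigPD : Sig.PosDef)
    (g : ℝ → ℝ) (hgmeas : Measurable g) (hg0 : ∀ x, 0 ≤ g x)
    (f : (Fin k → ℝ) → ℝ) (hf : ∀ y, f y = g (y ⬝ᵥ Sig⁻¹.mulVec y))
    (hf1 : (∫ y : Fin k → ℝ, f y) = 1)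
    (a : Fin k → ℝ) :
    (∀ y, 0 ≤ 2 * f y * G (a ⬝ᵥ y)) ∧ (∫ y : Fin k → ℝ, 2 * f y * G (a ⬝ᵥ y)) = 1 :=
  skewing_elliptical_density_general X hXmeas G' hXlaw hG'even G hG Sig g hg0 f hf hf1 a
end

section
/- Let X be a real random variable whose law has an even density G' with cumulative distribution function G, and let Y be a random vector in ℝ^k independent of X, whose law has a density f satisfying f(−y) = f(y) for almost every y (e.g. an elliptical density centred at 0). Let W : ℝ^k → ℝ be measurable with W(−y) = −W(y), and define Z = Y if X < W(Y) and Z = −Y if X > W(Y). Then the law of Z has density z ↦ 2 f(z) G(W(z)) with respect to Lebesgue measure on ℝ^k. -/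
open MeasureTheory Matrix ProbabilityTheory Real

/-!
Given `Y = y`, the variable `Z` equals `y` on the event `X < W y`, of probability `G (W y)`, and
`-y` on the complementary event, whose probability is `G (-W y) = G (W (-y))` because the law of `X`
is symmetric and atomless. Integrating against the law of `Y` and substituting `y ↦ -y` in the
second term, which the symmetry of that law allows, gives `P(Z ∈ A) = ∫_A 2 G (W y) dP_Y(y)`.
-/

open scoped ENNReal
open Set

namespace MeasureTheory

variable {α : Type*} [MeasurableSpace α]

theorem SimpleFunc.lintegral_withDensity_comm (μ : Measure α) (F : α → ℝ≥0∞)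
    (φ : SimpleFunc α ℝ≥0∞) :
    ∫⁻ a, F a ∂μ.withDensity φ = ∫⁻ a, φ a ∂μ.withDensity F := by
  induction φ using SimpleFunc.induction with
  | @const c s hs =>
    change ∫⁻ a, F a ∂μ.withDensity (s.indicator fun _ => c) =
      ∫⁻ a, s.indicator (fun _ => c) a ∂μ.withDensity F
    rw [withDensity_indicator hs, withDensity_const, lintegral_smul_measure,
      lintegral_indicator_const hs, withDensity_apply _ hs, smul_eq_mul]
  | @add φ ψ _ hφ hψ =>
    rw [SimpleFunc.coe_add, withDensity_add_left φ.measurable, lintegral_add_measure, hφ, hψ,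
      ← lintegral_add_left φ.measurable]
    rfl

/-- Decomposing `c` as a series of simple functions replaces monotone convergence, which is not
available for the possibly non-measurable `F`. -/
theorem lintegral_withDensity_comm (μ : Measure α) (F : α → ℝ≥0∞) {c : α → ℝ≥0∞}
    (hc : Measurable c) :
    ∫⁻ a, F a ∂μ.withDensity c = ∫⁻ a, c a ∂μ.withDensity F := by
  let d : ℕ → SimpleFunc α ℝ≥0∞ := fun n => (SimpleFunc.eapproxDiff c n).map (↑)
  have hc_sum : c = ∑' n, ⇑(d n) := by
    ext a
    simpa [d, ENNReal.tsum_apply] using (SimpleFunc.tsum_eapproxDiff c hc a).symm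
  rw [hc_sum, withDensity_tsum fun n => (d n).measurable, lintegral_sum_measure]
  simp only [ENNReal.tsum_apply]
  rw [lintegral_tsum fun n => (d n).measurable.aemeasurable]
  exact tsum_congr fun n => SimpleFunc.lintegral_withDensity_comm μ F (d n)

theorem withDensity_mul_of_measurable_right (μ : Measure α) (F : α → ℝ≥0∞)
    {c : α → ℝ≥0∞} (hc : Measurable c) (hc_fin : ∀ᵐ x ∂μ, c x < ∞) :
    μ.withDensity (F * c) = (μ.withDensity F).withDensity c := by
  ext s hs
  rw [withDensity_apply _ hs, withDensity_apply _ hs, restrict_withDensity hs,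
    ← lintegral_withDensity_comm _ _ hc, mul_comm,
    lintegral_withDensity_eq_lintegral_mul_non_measurable _ hc (ae_restrict_of_ae hc_fin)]

theorem isNegInvariant_withDensity {E : Type*} [MeasurableSpace E] [InvolutiveNeg E]
    [MeasurableNeg E] (μ : Measure E) [μ.IsNegInvariant] {D : E → ℝ≥0∞}
    (hD : ∀ᵐ x ∂μ, D (-x) = D x) : (μ.withDensity D).IsNegInvariant := by
  refine ⟨Measure.ext fun A hA => ?_⟩
  rw [Measure.neg_apply, ← Set.neg_preimage, withDensity_apply _ (measurable_neg hA),
    withDensity_apply _ hA]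
  exact (setLIntegral_congr_fun_ae (measurable_neg hA) (hD.mono fun x hx _ => hx.symm)).trans
    ((Measure.measurePreserving_neg μ).setLIntegral_comp_preimage_emb
      (MeasurableEquiv.neg E).measurableEmbedding D A)

end MeasureTheory

section SelectiveReflection

variable {E : Type*} [InvolutiveNeg E]

noncomputable def selectiveReflection (W : E → ℝ) (p : ℝ × E) : E :=
  if p.1 < W p.2 then p.2 else -p.2

theorem measurable_selectiveReflection [MeasurableSpace E] [MeasurableNeg E] {W : E → ℝ}
    (hW : Measurable W) : Measurable (selectiveReflection W) :=
  .ite (measurableSet_lt measurable_fst (hW.comp measurable_snd)) measurable_snd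
    measurable_snd.neg

theorem measurable_measure_Iic (ν : Measure ℝ) : Measurable fun t => ν (Iic t) :=
  Monotone.measurable fun _ _ hst => measure_mono (Iic_subset_Iic.2 hst)

theorem measure_Iic_neg (ν : Measure ℝ) [ν.IsNegInvariant] (t : ℝ) :
    ν (Iic (-t)) = ν (Ici t) := by
  rw [← neg_Ici, Measure.measure_neg]

theorem measure_Iic_add_measure_Ici (ν : Measure ℝ) [IsProbabilityMeasure ν]
    [NullSingletonClass ν] (t : ℝ) : ν (Iic t) + ν (Ici t) = 1 := by
  rw [← measure_congr Iio_ae_eq_Iic, ← compl_Ici, add_comm,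
    measure_add_measure_compl measurableSet_Ici, measure_univ]

theorem measure_selectiveReflection_slice (ν : Measure ℝ) [IsProbabilityMeasure ν]
    [NullSingletonClass ν] [ν.IsNegInvariant] {W : E → ℝ} (hW : ∀ y, W (-y) = -W y)
    (A : Set E) (y : E) :
    ν {x | selectiveReflection W (x, y) ∈ A} =
      A.indicator (fun y => ν (Iic (W y))) y + A.indicator (fun y => ν (Iic (W y))) (-y) := by
  by_cases hy : y ∈ A <;> by_cases hy' : -y ∈ A <;>
    simp only [selectiveReflection, apply_ite (· ∈ A), hy, hy', ite_self, if_false_left,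
      if_false_right, not_lt, and_true, ofPred_true, ofPred_false, measure_univ, measure_empty,
      indicator, ↓reduceIte, hW, measure_Iic_neg, add_zero, zero_add]
  exacts [(measure_Iic_add_measure_Ici ν (W y)).symm, measure_congr Iio_ae_eq_Iic, rfl]

theorem map_selectiveReflection_prod [MeasurableSpace E] [MeasurableNeg E] (ν : Measure ℝ)
    [IsProbabilityMeasure ν] [NullSingletonClass ν] [ν.IsNegInvariant] (μ : Measure E)
    [SFinite μ] [μ.IsNegInvariant] {W : E → ℝ} (hWm : Measurable W)
    (hW : ∀ y, W (-y) = -W y) :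
    (ν.prod μ).map (selectiveReflection W) = μ.withDensity fun y => 2 * ν (Iic (W y)) := by
  set h : E → ℝ≥0∞ := fun y => ν (Iic (W y))
  have hh : Measurable h := (measurable_measure_Iic ν).comp hWm
  ext A hA
  have hAh : Measurable (A.indicator h) := hh.indicator hA
  rw [Measure.map_apply (measurable_selectiveReflection hWm) hA,
    Measure.prod_apply_symm (measurable_selectiveReflection hWm hA), withDensity_apply _ hA]
  calc ∫⁻ y, ν {x | selectiveReflection W (x, y) ∈ A} ∂μ
      = ∫⁻ y, A.indicator h y + A.indicator h (-y) ∂μ :=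
        lintegral_congr fun y => measure_selectiveReflection_slice ν hW A y
    _ = ∫⁻ y, A.indicator h y ∂μ + ∫⁻ y, A.indicator h y ∂μ := by
        rw [lintegral_add_left hAh, (Measure.measurePreserving_neg μ).lintegral_comp hAh]
    _ = ∫⁻ y in A, 2 * h y ∂μ := by
        rw [← two_mul, lintegral_const_mul 2 hh, lintegral_indicator hA]

end SelectiveReflection

theorem skewed_density_generation_general {k : ℕ}
    {S : Type*} [MeasureSpace S] [IsProbabilityMeasure (ℙ : Measure S)]
    (X : S → ℝ) (hXmeas : Measurable X) (G' : ℝ → ℝ)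
    (hXlaw : Measure.map X ℙ = volume.withDensity fun x => ENNReal.ofReal (G' x))
    (hG'even : ∀ᵐ x : ℝ, G' (-x) = G' x)
    (G : ℝ → ℝ) (hG : ∀ x, G x = (ℙ {ω | X ω ≤ x}).toReal)
    (Y : S → Fin k → ℝ) (hYmeas : Measurable Y)
    (hindep : IndepFun X Y ℙ)
    (f : (Fin k → ℝ) → ℝ)
    (hYlaw : Measure.map Y ℙ = volume.withDensity fun y => ENNReal.ofReal (f y))
    (hfeven : ∀ᵐ y : Fin k → ℝ, f (-y) = f y)
    (W : (Fin k → ℝ) → ℝ) (hWmeas : Measurable W) (hWodd : ∀ y, W (-y) = -W y)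
    (Z : S → Fin k → ℝ)
    (hZ : ∀ ω, Z ω = if X ω < W (Y ω) then Y ω else -Y ω) :
    Measure.map Z ℙ =
      volume.withDensity fun z => ENNReal.ofReal (2 * f z * G (W z)) := by
  set ν := Measure.map X ℙ
  set μ := Measure.map Y ℙ
  have : IsProbabilityMeasure ν := Measure.isProbabilityMeasure_map hXmeas.aemeasurable
  have : IsProbabilityMeasure μ := Measure.isProbabilityMeasure_map hYmeas.aemeasurable
  have : NullSingletonClass ν := hXlaw ▸ inferInstance
  have : ν.IsNegInvariant :=
    hXlaw ▸ isNegInvariant_withDensity _ (hG'even.mono fun x hx => by rw [hx])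
  have : μ.IsNegInvariant :=
    hYlaw ▸ isNegInvariant_withDensity _ (hfeven.mono fun y hy => by rw [hy])
  have hZ_eq : Z = selectiveReflection W ∘ fun ω => (X ω, Y ω) := funext hZ
  have hG_eq : ∀ t, G t = (ν (Iic t)).toReal := fun t => by
    rw [hG, Measure.map_apply hXmeas measurableSet_Iic]; rfl
  calc Measure.map Z ℙ = (ν.prod μ).map (selectiveReflection W) := by
        rw [hZ_eq, ← Measure.map_map (measurable_selectiveReflection hWmeas)
          (hXmeas.prodMk hYmeas), (indepFun_iff_map_prod_eq_prod_map_map hXmeas.aemeasurable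
          hYmeas.aemeasurable).1 hindep]
    _ = μ.withDensity fun y => 2 * ν (Iic (W y)) :=
        map_selectiveReflection_prod ν μ hWmeas hWodd
    _ = volume.withDensity ((fun z => ENNReal.ofReal (f z)) * fun z => 2 * ν (Iic (W z))) := by
        rw [hYlaw]
        exact (withDensity_mul_of_measurable_right _ _
          (((measurable_measure_Iic ν).comp hWmeas).const_mul 2)
          (ae_of_all _ fun _ => ENNReal.mul_lt_top ENNReal.ofNat_lt_top (measure_lt_top _ _))).symm
    _ = _ := by
        congr with z
        rw [Pi.mul_apply, hG_eq, mul_comm 2 (f z), mul_assoc, ENNReal.ofReal_mul' (by positivity),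
          ENNReal.ofReal_mul zero_le_two, ENNReal.ofReal_ofNat,
          ENNReal.ofReal_toReal (measure_ne_top _ _)]

/-- random number generation for skewed densities.  If `X` has an
even density `G'` with cdf `G`, `Y` (independent of `X`) has an even density
`f`, `W` is odd, and `Z = Y` when `X < W(Y)`, `Z = −Y` otherwise, then `Z` has
density `z ↦ 2 f(z) G(W(z))`. -/
theorem skewed_density_generation {k : ℕ}
    {S : Type*} [MeasureSpace S] [IsProbabilityMeasure (ℙ : Measure S)]
    (X : S → ℝ) (hXmeas : Measurable X) (G' : ℝ → ℝ)
    (hXlaw : Measure.map X ℙ = volume.withDensity fun x => ENNReal.ofReal (G' x))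
    (hG'even : ∀ᵐ x : ℝ, G' (-x) = G' x)
    (G : ℝ → ℝ) (hG : ∀ x, G x = (ℙ {ω | X ω ≤ x}).toReal)
    (Y : S → Fin k → ℝ) (hYmeas : Measurable Y)
    (hindep : IndepFun X Y ℙ)
    (f : (Fin k → ℝ) → ℝ) (hf0 : ∀ y, 0 ≤ f y)
    (hYlaw : Measure.map Y ℙ = volume.withDensity fun y => ENNReal.ofReal (f y))
    (hfeven : ∀ᵐ y : Fin k → ℝ, f (-y) = f y)
    (W : (Fin k → ℝ) → ℝ) (hWmeas : Measurable W) (hWodd : ∀ y, W (-y) = -W y)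
    (Z : S → Fin k → ℝ)
    (hZ : ∀ ω, Z ω = if X ω < W (Y ω) then Y ω else -Y ω) :
    Measure.map Z ℙ =
      volume.withDensity fun z => ENNReal.ofReal (2 * f z * G (W z)) :=
  skewed_density_generation_general X hXmeas G' hXlaw hG'even G hG Y hYmeas hindep f hYlaw hfeven W
    hWmeas hWodd Z hZ
end
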